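/- arXiv:2012.01441 — 2 statements merged into one kernel-verified Lean document; each statement's English description precedes it below -/
import Mathlib

section
/- Let G be a classical system (finite sample space) and let I_A : L(H_A ⊗ ℝ^G) be realized as a family of completely positive trace-preserving maps on H_A conditioned on and updating the classical register G, and similarly I_B on H_B. Then for any initial product state ρ_A ⊗ ρ_B ⊗ p_G with ρ_A, ρ_B density matrices and p_G a probability distribution on G, the output state of A and B after applying I_A then I_B (and marginalizing or post-selecting on G) is separable. -/
open Matrix Finset
open scoped Kronecker ComplexOrder

/-- Extend a map on `A`-matrices to act on the first factor of `A × R`-matrices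
(identity on the second factor). -/
noncomputable def blockFst {A B R : Type*} [Fintype A] [Fintype B] [Fintype R]
    (E : Matrix A A ℂ →ₗ[ℂ] Matrix B B ℂ)
    (M : Matrix (A × R) (A × R) ℂ) : Matrix (B × R) (B × R) ℂ :=
  fun p q => E (fun i j => M (i, p.2) (j, q.2)) p.1 q.1

/-- Extend a map on `B`-matrices to act on the second factor of `R × B`-matrices. -/
noncomputable def blockSnd {B C R : Type*} [Fintype B] [Fintype C] [Fintype R]
    (E : Matrix B B ℂ →ₗ[ℂ] Matrix C C ℂ)
    (M : Matrix (R × B) (R × B) ℂ) : Matrix (R × C) (R × C) ℂ :=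
  fun p q => E (fun i j => M (p.1, i) (q.1, j)) p.2 q.2

/-- Complete positivity: the extension by any finite-dimensional identity preserves
positive semidefiniteness. -/
def IsCP {A : Type*} [Fintype A] (E : Matrix A A ℂ →ₗ[ℂ] Matrix A A ℂ) : Prop :=
  ∀ (R : Type) [Fintype R] [DecidableEq R],
    ∀ M : Matrix (A × R) (A × R) ℂ, M.PosSemidef → (blockFst E M).PosSemidef

def TraceNonincreasing {A : Type*} [Fintype A]
    (E : Matrix A A ℂ →ₗ[ℂ] Matrix A A ℂ) : Prop :=
  ∀ M : Matrix A A ℂ, M.PosSemidef → ((E M).trace).re ≤ (M.trace).re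

def TracePreserving {A : Type*} [Fintype A]
    (E : Matrix A A ℂ →ₗ[ℂ] Matrix A A ℂ) : Prop :=
  ∀ M : Matrix A A ℂ, (E M).trace = M.trace

/-- The tensor product map `E_A ⊗ E_B` acting on `(A × B)`-matrices. -/
noncomputable def prodMap {A B : Type*} [Fintype A] [Fintype B]
    (EA : Matrix A A ℂ →ₗ[ℂ] Matrix A A ℂ) (EB : Matrix B B ℂ →ₗ[ℂ] Matrix B B ℂ)
    (M : Matrix (A × B) (A × B) ℂ) : Matrix (A × B) (A × B) ℂ :=
  blockSnd EB (blockFst EA M)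

/-- The cone of separable positive operators. -/
def SepCone {A B : Type*} [Fintype A] [Fintype B]
    (M : Matrix (A × B) (A × B) ℂ) : Prop :=
  ∃ (n : ℕ) (σA : Fin n → Matrix A A ℂ) (σB : Fin n → Matrix B B ℂ),
    (∀ i, (σA i).PosSemidef) ∧ (∀ i, (σB i).PosSemidef) ∧
    M = ∑ i, σA i ⊗ₖ σB i

def IsDensity {A : Type*} [Fintype A] (ρ : Matrix A A ℂ) : Prop :=
  ρ.PosSemidef ∧ ρ.trace = 1

/-- Separable state: convex combination of product density operators. -/
def SepState {A B : Type*} [Fintype A] [Fintype B]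
    (M : Matrix (A × B) (A × B) ℂ) : Prop :=
  ∃ (n : ℕ) (p : Fin n → ℝ) (σA : Fin n → Matrix A A ℂ) (σB : Fin n → Matrix B B ℂ),
    (∀ i, 0 ≤ p i) ∧ (∑ i, p i = 1) ∧
    (∀ i, IsDensity (σA i)) ∧ (∀ i, IsDensity (σB i)) ∧
    M = ∑ i, (p i : ℂ) • (σA i ⊗ₖ σB i)

/-- One round of an A–G quantum-classical interaction acting on a `G`-indexed ensemble of
joint `A ⊗ B` operators: the classical register is measured and updated while the CP map
`E g g'` acts locally on `A`. -/
noncomputable def stepA {A B G : Type*} [Fintype A] [Fintype B] [Fintype G]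
    (E : G → G → (Matrix A A ℂ →ₗ[ℂ] Matrix A A ℂ))
    (ρ : G → Matrix (A × B) (A × B) ℂ) : G → Matrix (A × B) (A × B) ℂ :=
  fun g' => ∑ g, blockFst (E g g') (ρ g)

/-- One round of a B–G quantum-classical interaction, acting locally on `B`. -/
noncomputable def stepB {A B G : Type*} [Fintype A] [Fintype B] [Fintype G]
    (E : G → G → (Matrix B B ℂ →ₗ[ℂ] Matrix B B ℂ))
    (ρ : G → Matrix (A × B) (A × B) ℂ) : G → Matrix (A × B) (A × B) ℂ :=
  fun g' => ∑ g, blockSnd (E g g') (ρ g)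

/-- A quantum-classical interaction: each branch is completely positive and for each classical
input the total map is trace preserving. -/
def IsQCInteraction {A G : Type*} [Fintype A] [Fintype G]
    (E : G → G → (Matrix A A ℂ →ₗ[ℂ] Matrix A A ℂ)) : Prop :=
  (∀ g g', IsCP (E g g')) ∧
  (∀ g, ∀ M : Matrix A A ℂ, ∑ g', ((E g g') M).trace = M.trace)

/-!
Each branch `E g g'` of a quantum-classical interaction is completely positive and acts on one
party only, so it maps a product of positive operators `σ ⊗ τ` to the product `E g g' σ ⊗ τ` of
positive operators. Hence the cone of separable operators is stable under both rounds, and the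
product input `p g • ρA ⊗ ρB` ends up separable in every classical branch and in their sum.
-/

section Separability

variable {A B C R : Type*} [Fintype A] [Fintype B] [Fintype C] [Fintype R]

theorem blockFst_sum {ι : Type*} (E : Matrix A A ℂ →ₗ[ℂ] Matrix C C ℂ) (s : Finset ι)
    (M : ι → Matrix (A × R) (A × R) ℂ) :
    blockFst E (∑ i ∈ s, M i) = ∑ i ∈ s, blockFst E (M i) := by
  ext p q
  change E (of fun i j => (∑ x ∈ s, M x) (i, p.2) (j, q.2)) p.1 q.1 = _
  have : (of fun i j => (∑ x ∈ s, M x) (i, p.2) (j, q.2)) =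
      ∑ x ∈ s, of fun i j => M x (i, p.2) (j, q.2) := by
    ext i j; simp only [of_apply, Matrix.sum_apply]
  rw [this, map_sum]
  simp only [Matrix.sum_apply]
  rfl

theorem blockSnd_sum {ι : Type*} (E : Matrix B B ℂ →ₗ[ℂ] Matrix C C ℂ) (s : Finset ι)
    (M : ι → Matrix (R × B) (R × B) ℂ) :
    blockSnd E (∑ i ∈ s, M i) = ∑ i ∈ s, blockSnd E (M i) := by
  ext p q
  change E (of fun i j => (∑ x ∈ s, M x) (p.1, i) (q.1, j)) p.2 q.2 = _
  have : (of fun i j => (∑ x ∈ s, M x) (p.1, i) (q.1, j)) =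
      ∑ x ∈ s, of fun i j => M x (p.1, i) (q.1, j) := by
    ext i j; simp only [of_apply, Matrix.sum_apply]
  rw [this, map_sum]
  simp only [Matrix.sum_apply]
  rfl

theorem blockFst_kronecker (E : Matrix A A ℂ →ₗ[ℂ] Matrix C C ℂ) (σ : Matrix A A ℂ)
    (τ : Matrix R R ℂ) : blockFst E (σ ⊗ₖ τ) = E σ ⊗ₖ τ := by
  ext p q
  have : (fun i j => σ i j * τ p.2 q.2) = τ p.2 q.2 • σ := by
    ext i j; exact mul_comm _ _
  simp only [blockFst, kroneckerMap_apply, this, map_smul, Matrix.smul_apply, smul_eq_mul,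
    mul_comm]

theorem blockSnd_kronecker (E : Matrix B B ℂ →ₗ[ℂ] Matrix C C ℂ) (τ : Matrix R R ℂ)
    (σ : Matrix B B ℂ) : blockSnd E (τ ⊗ₖ σ) = τ ⊗ₖ E σ := by
  ext p q
  have : (fun i j => τ p.1 q.1 * σ i j) = τ p.1 q.1 • σ := rfl
  simp only [blockSnd, kroneckerMap_apply, this, map_smul, Matrix.smul_apply, smul_eq_mul]

theorem IsCP.posSemidef_apply {E : Matrix A A ℂ →ₗ[ℂ] Matrix A A ℂ} (hE : IsCP E)
    {ρ : Matrix A A ℂ} (hρ : ρ.PosSemidef) : (E ρ).PosSemidef :=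
  (hE Unit (ρ.submatrix Prod.fst Prod.fst) (hρ.submatrix Prod.fst)).submatrix (·, ())

theorem sepCone_zero : SepCone (0 : Matrix (A × B) (A × B) ℂ) :=
  ⟨0, ![], ![], nofun, nofun, by simp⟩

theorem sepCone_kronecker {σ : Matrix A A ℂ} {τ : Matrix B B ℂ} (hσ : σ.PosSemidef)
    (hτ : τ.PosSemidef) : SepCone (σ ⊗ₖ τ) :=
  ⟨1, ![σ], ![τ], Fin.forall_fin_one.2 hσ, Fin.forall_fin_one.2 hτ, by simp⟩

theorem SepCone.add {M N : Matrix (A × B) (A × B) ℂ} (hM : SepCone M) (hN : SepCone N) :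
    SepCone (M + N) := by
  obtain ⟨m, σ, τ, hσ, hτ, rfl⟩ := hM
  obtain ⟨n, σ', τ', hσ', hτ', rfl⟩ := hN
  refine ⟨m + n, Fin.append σ σ', Fin.append τ τ', Fin.addCases ?_ ?_, Fin.addCases ?_ ?_, ?_⟩
  all_goals simp [Fin.sum_univ_add, *]

theorem SepCone.sum {ι : Type*} {s : Finset ι} {M : ι → Matrix (A × B) (A × B) ℂ}
    (h : ∀ i ∈ s, SepCone (M i)) : SepCone (∑ i ∈ s, M i) := by
  classical
  induction s using Finset.induction with
  | empty => simpa using sepCone_zero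
  | insert i s hi ih =>
    rw [Finset.sum_insert hi]
    exact (h i (mem_insert_self i s)).add (ih fun j hj => h j (mem_insert_of_mem hj))

theorem IsCP.sepCone_blockFst {E : Matrix A A ℂ →ₗ[ℂ] Matrix A A ℂ} (hE : IsCP E)
    {M : Matrix (A × B) (A × B) ℂ} (hM : SepCone M) : SepCone (blockFst E M) := by
  obtain ⟨n, σ, τ, hσ, hτ, rfl⟩ := hM
  rw [blockFst_sum]
  refine SepCone.sum fun i _ => ?_
  rw [blockFst_kronecker]
  exact sepCone_kronecker (hE.posSemidef_apply (hσ i)) (hτ i)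

theorem IsCP.sepCone_blockSnd {E : Matrix B B ℂ →ₗ[ℂ] Matrix B B ℂ} (hE : IsCP E)
    {M : Matrix (A × B) (A × B) ℂ} (hM : SepCone M) : SepCone (blockSnd E M) := by
  obtain ⟨n, σ, τ, hσ, hτ, rfl⟩ := hM
  rw [blockSnd_sum]
  refine SepCone.sum fun i _ => ?_
  rw [blockSnd_kronecker]
  exact sepCone_kronecker (hσ i) (hE.posSemidef_apply (hτ i))

variable {G : Type*} [Fintype G]

theorem sepCone_stepA {E : G → G → (Matrix A A ℂ →ₗ[ℂ] Matrix A A ℂ)}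
    (hE : ∀ g g', IsCP (E g g')) {ρ : G → Matrix (A × B) (A × B) ℂ}
    (hρ : ∀ g, SepCone (ρ g)) (g' : G) : SepCone (stepA E ρ g') :=
  SepCone.sum fun g _ => (hE g g').sepCone_blockFst (hρ g)

theorem sepCone_stepB {E : G → G → (Matrix B B ℂ →ₗ[ℂ] Matrix B B ℂ)}
    (hE : ∀ g g', IsCP (E g g')) {ρ : G → Matrix (A × B) (A × B) ℂ}
    (hρ : ∀ g, SepCone (ρ g)) (g' : G) : SepCone (stepB E ρ g') :=
  SepCone.sum fun g _ => (hE g g').sepCone_blockSnd (hρ g)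

end Separability

/-- An interaction of `A` and `B` mediated by a classical system `G` (first `A`–`G`, then
`B`–`G`), applied to a product state `ρ_A ⊗ ρ_B ⊗ p_G`, yields a separable `AB` state both
after post-selecting on any final classical value `s'` and after marginalizing over `G`. -/
theorem classical_mediator_one_round_separable
    {A B G : Type*} [Fintype A] [Fintype B] [Fintype G]
    (IA : G → G → (Matrix A A ℂ →ₗ[ℂ] Matrix A A ℂ))
    (IB : G → G → (Matrix B B ℂ →ₗ[ℂ] Matrix B B ℂ))
    (hIA : IsQCInteraction IA) (hIB : IsQCInteraction IB)
    (ρA : Matrix A A ℂ) (ρB : Matrix B B ℂ)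
    (hρA : IsDensity ρA) (hρB : IsDensity ρB)
    (p : G → ℝ) (hp : (∀ g, 0 ≤ p g) ∧ ∑ g, p g = 1) :
    let init : G → Matrix (A × B) (A × B) ℂ := fun g => (p g : ℂ) • (ρA ⊗ₖ ρB)
    let out := stepB IB (stepA IA init)
    (∀ s' : G, SepCone (out s')) ∧ SepCone (∑ g', out g') := by
  intro init out
  have h_init : ∀ g, SepCone (init g) := fun g => by
    simpa only [init, smul_kronecker] using
      sepCone_kronecker (hρA.1.smul (Complex.zero_le_real.2 (hp.1 g))) hρB.1
  have h_out : ∀ s', SepCone (out s') := sepCone_stepB hIB.1 (sepCone_stepA hIA.1 h_init)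
  exact ⟨h_out, SepCone.sum fun g' _ => h_out g'⟩
end

section
/- Any positive operator of the form ∑_i σ_i^A ⊗ σ_i^B with σ_i^{A,B} positive semidefinite has positive partial transpose: (id ⊗ T)(∑_i σ_i^A ⊗ σ_i^B) ⪰ 0, where T is matrix transposition on the B factor. Consequently, a bipartite state whose partial transpose has a negative eigenvalue (such as the maximally entangled state on ℂ² ⊗ ℂ²) is not separable. -/
open Matrix Finset
open scoped Kronecker ComplexOrder

/-- Partial transpose on the `B` factor. -/
def partialTranspose {A B : Type*} (M : Matrix (A × B) (A × B) ℂ) :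
    Matrix (A × B) (A × B) ℂ :=
  fun p q => M (p.1, q.2) (q.1, p.2)

/-- The maximally entangled Bell vector on `ℂ² ⊗ ℂ²`. -/
noncomputable def bell : Fin 2 × Fin 2 → ℂ :=
  fun z => if z.1 = z.2 then ((Real.sqrt 2 : ℂ))⁻¹ else 0

/-! The partial transpose is additive and sends `σᴬ ⊗ₖ σᴮ` to `σᴬ ⊗ₖ (σᴮ)ᵀ`; since transposition
preserves positive semidefiniteness, the partial transpose of a separable operator is a sum of
Kronecker products of positive semidefinite matrices. For the Bell state the partial transpose is
half the swap operator, which takes the value `-1` on the antisymmetric vector `e₀₁ - e₁₀`. -/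

lemma partialTranspose_sum {A B ι : Type*} (s : Finset ι) (M : ι → Matrix (A × B) (A × B) ℂ) :
    partialTranspose (∑ i ∈ s, M i) = ∑ i ∈ s, partialTranspose (M i) := by
  ext p q
  simp only [partialTranspose, Matrix.sum_apply]

lemma partialTranspose_kronecker {A B : Type*} (M : Matrix A A ℂ) (N : Matrix B B ℂ) :
    partialTranspose (M ⊗ₖ N) = M ⊗ₖ Nᵀ :=
  rfl

lemma SepCone.posSemidef_partialTranspose {A B : Type*} [Fintype A] [Fintype B]
    {M : Matrix (A × B) (A × B) ℂ} (hM : SepCone M) : (partialTranspose M).PosSemidef := by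
  obtain ⟨n, σA, σB, hA, hB, rfl⟩ := hM
  simp only [partialTranspose_sum, partialTranspose_kronecker]
  exact posSemidef_sum _ fun i _ => (hA i).kronecker (hB i).transpose

lemma bell_mul_conj_bell (a b : Fin 2 × Fin 2) :
    bell a * starRingEnd ℂ (bell b) = if a.1 = a.2 ∧ b.1 = b.2 then 2⁻¹ else 0 := by
  have hsqrt : ((Real.sqrt 2 : ℂ))⁻¹ * starRingEnd ℂ ((Real.sqrt 2 : ℂ))⁻¹ = 2⁻¹ := by
    rw [map_inv₀, Complex.conj_ofReal, ← mul_inv, ← Complex.ofReal_mul,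
      Real.mul_self_sqrt zero_le_two, Complex.ofReal_ofNat]
  unfold bell
  split_ifs <;> simp_all

lemma not_posSemidef_partialTranspose_bell :
    ¬ (partialTranspose (vecMulVec bell (star bell))).PosSemidef := by
  intro hPSD
  have hneg := hPSD.dotProduct_mulVec_nonneg (Pi.single (0, 1) 1 - Pi.single (1, 0) 1)
  simp [dotProduct, mulVec, partialTranspose, vecMulVec_apply, bell_mul_conj_bell,
    Fintype.sum_prod_type, Fin.sum_univ_two, Pi.single_apply] at hneg
  norm_num [Complex.le_def] at hneg

/-- Separable operators have positive partial transpose; consequently any state whose partial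
transpose is not positive semidefinite—such as the maximally entangled state on `ℂ² ⊗ ℂ²`—is
not separable. -/
theorem PPT_criterion
    {A B : Type*} [Fintype A] [Fintype B] :
    (∀ M : Matrix (A × B) (A × B) ℂ, SepCone M → (partialTranspose M).PosSemidef) ∧
    (∀ ρ : Matrix (A × B) (A × B) ℂ, ¬ (partialTranspose ρ).PosSemidef → ¬ SepCone ρ) ∧
    ¬ SepCone (Matrix.vecMulVec bell (star bell)) :=
  ⟨fun _ hM => hM.posSemidef_partialTranspose,
    fun _ hρ hsep => hρ hsep.posSemidef_partialTranspose,
    fun hsep => not_posSemidef_partialTranspose_bell hsep.posSemidef_partialTranspose⟩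
end
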